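/- For the kernel w(u) = (1-u²)·1_{(-1,1)}(u), with g(t) = ∫_0^1 w(t-u) du, the function ρ⋆(s,t) = w(t-s) - g(t) - g(s) + ∫_0^1 g(u) du satisfies ρ⋆(s,t) = 2(s - 1/2)(t - 1/2) for all s,t ∈ [0,1]. -/
import Mathlib


open MeasureTheory

lemma poly_int (t : ℝ) : ∫ u in (0:ℝ)..1, (1 - (t - u)^2) = 2/3 + t - t^2 := by
  have h : (fun u : ℝ => 1 - (t - u)^2)
      = fun u : ℝ => (1 - t^2) + ((2*t) * u - u^2) := by
    funext u; ring
  have i1 : (∫ u in (0:ℝ)..1, ((2*t) * u - u^2)) = t - 1/3 := by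
    rw [intervalIntegral.integral_sub (Continuous.intervalIntegrable (by continuity) _ _)
        (Continuous.intervalIntegrable (by continuity) _ _),
      intervalIntegral.integral_const_mul, integral_id,
      integral_pow]
    norm_num; ring
  rw [h, intervalIntegral.integral_add (intervalIntegrable_const)
      (Continuous.intervalIntegrable (by continuity) _ _),
    intervalIntegral.integral_const, i1]
  norm_num
  ring

lemma int2' : (∫ u in (0:ℝ)..1, (2/3 + u - u^2)) = 5/6 := by
  have h : (fun u : ℝ => 2/3 + u - u^2)
      = fun u : ℝ => (2/3 : ℝ) + (u - u^2) := by funext u; ring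
  have i1 : (∫ u in (0:ℝ)..1, (u - u^2)) = 1/6 := by
    rw [intervalIntegral.integral_sub (Continuous.intervalIntegrable (by continuity) _ _)
        (Continuous.intervalIntegrable (by continuity) _ _),
      integral_id, integral_pow]
    norm_num
  rw [h, intervalIntegral.integral_add (intervalIntegrable_const)
      (Continuous.intervalIntegrable (by continuity) _ _),
    intervalIntegral.integral_const, i1]
  norm_num

/-- explicit form of ρ⋆ for the kernel w(u) = (1-u²)·1_{(-1,1)}(u). -/
theorem rho_star_quadratic_kernel
    (w : ℝ → ℝ) (hw : ∀ u, w u = if |u| < 1 then 1 - u^2 else 0)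
    (g : ℝ → ℝ) (hg : ∀ t, g t = ∫ u in (0:ℝ)..1, w (t - u))
    (ρ : ℝ → ℝ → ℝ)
    (hρ : ∀ s t, ρ s t = w (t - s) - g t - g s + ∫ u in (0:ℝ)..1, g u) :
    ∀ s ∈ Set.Icc (0:ℝ) 1, ∀ t ∈ Set.Icc (0:ℝ) 1,
      ρ s t = 2 * (s - 1/2) * (t - 1/2) := by
  have hw' : ∀ u : ℝ, |u| ≤ 1 → w u = 1 - u^2 := by
    intro u hu
    rcases lt_or_eq_of_le hu with h | h
    · rw [hw u, if_pos h]
    · rw [hw u, if_neg (by simp [h])]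
      have h2 : u^2 = 1 := by
        have := sq_abs u
        rw [h] at this
        nlinarith
      rw [h2]; ring
  have hgval : ∀ t ∈ Set.Icc (0:ℝ) 1, g t = 2/3 + t - t^2 := by
    intro t ht
    rw [hg t, ← poly_int t]
    apply intervalIntegral.integral_congr
    intro u hu
    rw [Set.uIcc_of_le (by norm_num : (0:ℝ) ≤ 1)] at hu
    apply hw'
    rw [abs_le]
    exact ⟨by nlinarith [ht.1, ht.2, hu.1, hu.2], by nlinarith [ht.1, ht.2, hu.1, hu.2]⟩
  have hintg : (∫ u in (0:ℝ)..1, g u) = 5/6 := by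
    have h1 : (∫ u in (0:ℝ)..1, g u) = ∫ u in (0:ℝ)..1, (2/3 + u - u^2) := by
      apply intervalIntegral.integral_congr
      intro u hu
      rw [Set.uIcc_of_le (by norm_num : (0:ℝ) ≤ 1)] at hu
      exact hgval u hu
    rw [h1, int2']
  intro s hs t ht
  rw [hρ, hgval t ht, hgval s hs, hintg, hw']
  · ring
  · rw [abs_le]
    exact ⟨by nlinarith [hs.1, hs.2, ht.1, ht.2], by nlinarith [hs.1, hs.2, ht.1, ht.2]⟩
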